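/- Let g : {0,1}ⁿ → ℝ be nonnegative with 𝔼g = 1 (expectation under the uniform measure), with even part g₀ and odd part g₁. Define Ent(g) = 𝔼[g·log₂ g] (with 0·log₂ 0 = 0). Then Ent(g) = Ent(g₀) + 𝔼_x [ g₀(x)·(1 − H((1 − |g₁(x)|/g₀(x))/2)) ], where H is the binary entropy function and the summand is interpreted as 0 at points where g₀(x) = g₁(x) = 0. -/

import Mathlib

/-! Averaging `g log g` over the pairs `{x, xᶜ}` does not change its expectation, and `g₀` has the
same expectation as `g`. So it suffices to show, for each pair of values `a = g x`, `b = g xᶜ` with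
mean `m = g₀ x`, that `(a log a + b log b) / 2 = m log m + m (1 - H(a / (a + b)))`, which is the
chain rule for entropy on one pair: write `a = 2m p`, `b = 2m (1 - p)` and expand the logarithms. -/

open Finset

noncomputable def expec (n : ℕ) (f : (Fin n → Bool) → ℝ) : ℝ :=
  (∑ x : Fin n → Bool, f x) / 2 ^ n

noncomputable def walsh (n : ℕ) (S : Finset (Fin n)) (x : Fin n → Bool) : ℝ :=
  ∏ i ∈ S, (if x i then (-1 : ℝ) else 1)

noncomputable def fcoef (n : ℕ) (f : (Fin n → Bool) → ℝ) (S : Finset (Fin n)) : ℝ :=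
  expec n (fun x => f x * walsh n S x)

def comp (n : ℕ) (x : Fin n → Bool) : Fin n → Bool := fun i => !(x i)

noncomputable def evenPart (n : ℕ) (f : (Fin n → Bool) → ℝ) (x : Fin n → Bool) : ℝ :=
  (f x + f (comp n x)) / 2

noncomputable def oddPart (n : ℕ) (f : (Fin n → Bool) → ℝ) (x : Fin n → Bool) : ℝ :=
  f x - evenPart n f x

noncomputable def noiseK (n : ℕ) (ε : ℝ) (x y : Fin n → Bool) : ℝ :=
  ∏ i : Fin n, (if x i = y i then 1 - ε else ε)

noncomputable def noiseOp (n : ℕ) (ε : ℝ) (f : (Fin n → Bool) → ℝ) (x : Fin n → Bool) : ℝ :=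
  ∑ y : Fin n → Bool, noiseK n ε x y * f y

noncomputable def entro (n : ℕ) (g : (Fin n → Bool) → ℝ) : ℝ :=
  expec n (fun x => g x * Real.logb 2 (g x)) - expec n g * Real.logb 2 (expec n g)

noncomputable def varia (n : ℕ) (g : (Fin n → Bool) → ℝ) : ℝ :=
  expec n (fun x => g x ^ 2) - (expec n g) ^ 2

noncomputable def binEnt (x : ℝ) : ℝ := -x * Real.logb 2 x - (1 - x) * Real.logb 2 (1 - x)

open Real

lemma mul_logb_div (b x : ℝ) {t : ℝ} (ht : t ≠ 0) :
    x * logb b (x / t) = x * logb b x - x * logb b t := by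
  rcases eq_or_ne x 0 with rfl | hx
  · simp
  · rw [logb_div hx ht, mul_sub]

lemma half_add_mul_binEnt_div {a b : ℝ} (h : a + b ≠ 0) :
    (a + b) / 2 * binEnt (a / (a + b))
      = (a + b) / 2 * logb 2 (a + b) - (a * logb 2 a + b * logb 2 b) / 2 := by
  have hb : 1 - a / (a + b) = b / (a + b) := by field_simp; ring
  have ha' : (a + b) / 2 * (a / (a + b)) = a / 2 := by field_simp
  have hb' : (a + b) / 2 * (b / (a + b)) = b / 2 := by field_simp
  rw [binEnt, hb]
  linear_combination (-logb 2 (a / (a + b))) * ha' + (-logb 2 (b / (a + b))) * hb'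
    - mul_logb_div 2 a h / 2 - mul_logb_div 2 b h / 2

/- With `m = (a + b) / 2` and `a ≤ b`, the argument of `binEnt` is `a / (a + b)`. Since `logb` is
`logb |·|`, the identity holds without any sign condition on `a` and `b`. -/
lemma average_mul_logb_eq (a b : ℝ) :
    (a * logb 2 a + b * logb 2 b) / 2
      = (a + b) / 2 * logb 2 ((a + b) / 2)
        + (a + b) / 2 * (1 - binEnt ((1 - |a - b| / (a + b)) / 2)) := by
  wlog hab : a ≤ b generalizing a b
  · rw [abs_sub_comm, add_comm a b, add_comm (a * _)]
    exact this b a (le_of_not_ge hab)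
  rcases eq_or_ne (a + b) 0 with h | h
  · obtain rfl : b = -a := by linarith
    simp [logb_neg_eq_logb]
  · have hp : (1 - |a - b| / (a + b)) / 2 = a / (a + b) := by
      rw [abs_of_nonpos (by linarith)]; field_simp; ring
    have hhalf : logb 2 ((a + b) / 2) = logb 2 (a + b) - 1 := by
      rw [logb_div h two_ne_zero, logb_self_eq_one one_lt_two]
    rw [hp, mul_sub, half_add_mul_binEnt_div h, hhalf]
    ring

lemma comp_involutive (n : ℕ) : Function.Involutive (comp n) := by
  intro x
  funext i
  simp [comp]

lemma expec_add (n : ℕ) (f h : (Fin n → Bool) → ℝ) :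
    expec n (fun x => f x + h x) = expec n f + expec n h := by
  rw [expec, expec, expec, sum_add_distrib, add_div]

lemma expec_evenPart (n : ℕ) (f : (Fin n → Bool) → ℝ) : expec n (evenPart n f) = expec n f := by
  have hcomp : ∑ x, f (comp n x) = ∑ x, f x := Equiv.sum_comp (comp_involutive n).toPerm f
  unfold expec evenPart
  rw [← sum_div, sum_add_distrib, hcomp, add_self_div_two]

lemma abs_oddPart_div_evenPart (n : ℕ) (f : (Fin n → Bool) → ℝ) (x : Fin n → Bool) :
    |oddPart n f x| / evenPart n f x = |f x - f (comp n x)| / (f x + f (comp n x)) := by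
  rw [oddPart, evenPart, show f x - (f x + f (comp n x)) / 2 = (f x - f (comp n x)) / 2 by ring,
    abs_div, abs_two, div_div_div_cancel_right₀ two_ne_zero]

lemma evenPart_mul_logb (n : ℕ) (g : (Fin n → Bool) → ℝ) (x : Fin n → Bool) :
    evenPart n (fun y => g y * logb 2 (g y)) x
      = evenPart n g x * logb 2 (evenPart n g x)
        + evenPart n g x * (1 - binEnt ((1 - |oddPart n g x| / evenPart n g x) / 2)) := by
  rw [abs_oddPart_div_evenPart]
  exact average_mul_logb_eq _ _

theorem stmt_7_general (n : ℕ) (g : (Fin n → Bool) → ℝ) :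
    entro n g = entro n (evenPart n g)
      + expec n (fun x => evenPart n g x *
          (1 - binEnt ((1 - |oddPart n g x| / evenPart n g x) / 2))) := by
  have hsymm : expec n (fun x => g x * logb 2 (g x))
      = expec n (evenPart n (fun x => g x * logb 2 (g x))) := (expec_evenPart n _).symm
  rw [entro, entro, expec_evenPart, hsymm, funext (evenPart_mul_logb n g), expec_add]
  ring

theorem stmt_7 (n : ℕ) (g : (Fin n → Bool) → ℝ) (hg : ∀ x, 0 ≤ g x) (hE : expec n g = 1) :
    entro n g = entro n (evenPart n g)
      + expec n (fun x => evenPart n g x *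
          (1 - binEnt ((1 - |oddPart n g x| / evenPart n g x) / 2))) :=
  stmt_7_general n g
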